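/- arXiv:2008.11129 — 3 statements merged into one kernel-verified Lean document; each statement's English description precedes it below -/
import Mathlib

section
/- Suppose σ = σ_1 σ_2 ⋯ σ_h in S_k with |σ| = |σ_1| + |σ_2| + ⋯ + |σ_h| and each σ_i ≠ 1. Then each σ_i lies in the Young subgroup Y_σ of permutations preserving the partition of {1,...,k} into the supports of the cycles of σ (i.e., every cycle of each σ_i has its support contained in the support of a single cycle of σ). -/
/-- The number of cycles of a permutation of `Fin k`, counting fixed points. -/
def cycles {k : ℕ} (σ : Equiv.Perm (Fin k)) : ℕ :=
  σ.cycleType.card + (k - σ.support.card)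

/-- The length `|σ| := k - c(σ)`. -/
def len {k : ℕ} (σ : Equiv.Perm (Fin k)) : ℕ := k - cycles σ

/-! Left multiplication by a transposition `(a b)` splits the common cycle of `a` and `b` or
merges their two cycles. Either way the orbit partition changes by at most one class, and it does
change because `sign = (-1) ^ len`; so `len` moves by exactly one, and `len` is subadditive.
If `len (τ * ρ) = len τ + len ρ`, build `τ * ρ` from `ρ` by the transpositions of a shortest
factorization of `τ`: each one must merge, so the cycles of the intermediate products only
coarsen and each transposition joins two points of one cycle of `τ * ρ`. Hence `τ` and `ρ`
preserve every cycle of `τ * ρ`; induction on the list of factors finishes. -/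

open Equiv Finset

namespace Setoid

variable {α : Type*}

def mergeClasses (s : Setoid α) (a b : α) : Setoid α where
  r x y := s x y ∨ ((s x a ∨ s x b) ∧ (s y a ∨ s y b))
  iseqv := by
    refine ⟨fun x => .inl (s.refl' x), ?_, ?_⟩
    · rintro x y (h | ⟨hx, hy⟩)
      exacts [.inl (s.symm' h), .inr ⟨hy, hx⟩]
    · rintro x y z (hxy | ⟨hx, hy⟩) (hyz | ⟨hy', hz⟩)
      · exact .inl (s.trans' hxy hyz)
      · exact .inr ⟨hy'.imp (s.trans' hxy) (s.trans' hxy), hz⟩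
      · exact .inr ⟨hx, hy.imp (s.trans' (s.symm' hyz)) (s.trans' (s.symm' hyz))⟩
      · exact .inr ⟨hx, hz⟩

theorem le_mergeClasses (s : Setoid α) (a b : α) : s ≤ s.mergeClasses a b :=
  fun _ _ => .inl

theorem mergeClasses_le {s : Setoid α} {a b : α} (h : s a b) : s.mergeClasses a b ≤ s := by
  rintro x y (hxy | ⟨hx, hy⟩)
  · exact hxy
  · have near {z} (hz : s z a ∨ s z b) : s z a := hz.elim id (s.trans' · (s.symm' h))
    exact s.trans' (near hx) (s.symm' (near hy))

theorem card_quotient_le_of_le [Finite α] {s t : Setoid α} (h : s ≤ t) :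
    Nat.card (Quotient t) ≤ Nat.card (Quotient s) :=
  Nat.card_le_card_of_surjective (map_of_le h) fun q => q.inductionOn fun x => ⟨⟦x⟧, rfl⟩

theorem card_quotient_le_card_quotient_mergeClasses_add_one [Finite α] (s : Setoid α) (a b : α) :
    Nat.card (Quotient s) ≤ Nat.card (Quotient (s.mergeClasses a b)) + 1 := by
  classical
  let f (q : Quotient s) : Option (Quotient (s.mergeClasses a b)) :=
    if q = ⟦b⟧ then none else some (map_of_le (s.le_mergeClasses a b) q)
  have hf : Function.Injective f := by
    intro q₁ q₂ hq
    induction q₁ using Quotient.inductionOn with | _ x =>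
    induction q₂ using Quotient.inductionOn with | _ y =>
    by_cases hx : (⟦x⟧ : Quotient s) = ⟦b⟧ <;> by_cases hy : (⟦y⟧ : Quotient s) = ⟦b⟧ <;>
      simp only [f, hx, hy, if_true, if_false, reduceCtorEq, Option.some.injEq] at hq
    · rw [hx, hy]
    · have hxb : ¬ s x b := fun h => hx (Quotient.sound h)
      have hyb : ¬ s y b := fun h => hy (Quotient.sound h)
      refine Quotient.sound ((Quotient.exact hq).elim id fun ⟨hxa, hya⟩ => ?_)
      exact s.trans' (hxa.resolve_right hxb) (s.symm' (hya.resolve_right hyb))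
  simpa using Nat.card_le_card_of_injective f hf

end Setoid

namespace Equiv.Perm

variable {α : Type*} {σ : Perm α} {a b : α}

theorem SameCycle.setoid_le {s : Setoid α} (h : ∀ x, s x (σ x)) : SameCycle.setoid σ ≤ s := by
  rintro x _ ⟨i, rfl⟩
  induction i using Int.induction_on with
  | zero => exact s.refl' x
  | succ i ih => rw [add_comm, zpow_one_add, mul_apply]; exact s.trans' ih (h _)
  | pred i ih =>
    have h' := h ((σ ^ (-(i : ℤ) - 1)) x)
    rw [← mul_apply, ← zpow_one_add, add_sub_cancel] at h'
    exact s.trans' ih (s.symm' h')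

def youngSubgroup (σ : Perm α) : Subgroup (Perm α) where
  carrier := {τ | ∀ x, σ.SameCycle x (τ x)}
  mul_mem' {τ ρ} hτ hρ x := (hρ x).trans (hτ (ρ x))
  one_mem' x := .refl σ x
  inv_mem' {τ} hτ x := by simpa using (hτ (τ⁻¹ x)).symm

theorem mem_youngSubgroup_iff_le {τ : Perm α} :
    τ ∈ youngSubgroup σ ↔ SameCycle.setoid τ ≤ SameCycle.setoid σ :=
  ⟨fun h => SameCycle.setoid_le h, fun h x => h (sameCycle_apply_right.2 (.refl τ x))⟩

theorem youngSubgroup_mono {σ' : Perm α} (h : SameCycle.setoid σ ≤ SameCycle.setoid σ') :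
    youngSubgroup σ ≤ youngSubgroup σ' :=
  fun _ hτ x => h (hτ x)

theorem youngSubgroup_le_of_mem {τ : Perm α} (h : τ ∈ youngSubgroup σ) :
    youngSubgroup τ ≤ youngSubgroup σ :=
  youngSubgroup_mono (mem_youngSubgroup_iff_le.1 h)

theorem self_mem_youngSubgroup (σ : Perm α) : σ ∈ youngSubgroup σ :=
  fun x => sameCycle_apply_right.2 (.refl σ x)

variable [DecidableEq α]

theorem swap_mem_youngSubgroup (h : σ.SameCycle a b) : swap a b ∈ youngSubgroup σ := by
  intro x
  rcases eq_or_ne x a with rfl | hxa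
  · simpa using h
  rcases eq_or_ne x b with rfl | hxb
  · simpa using h.symm
  · rw [swap_apply_of_ne_of_ne hxa hxb]

theorem SameCycle.setoid_swap_mul_le_mergeClasses (σ : Perm α) (a b : α) :
    SameCycle.setoid (swap a b * σ) ≤ (SameCycle.setoid σ).mergeClasses a b := by
  refine SameCycle.setoid_le fun x => ?_
  have hx : σ.SameCycle x (σ x) := sameCycle_apply_right.2 (.refl σ x)
  rw [mul_apply]
  rcases eq_or_ne (σ x) a with ha | ha
  · rw [ha, swap_apply_left]
    exact .inr ⟨.inl (ha ▸ hx), .inr (.refl σ b)⟩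
  rcases eq_or_ne (σ x) b with hb | hb
  · rw [hb, swap_apply_right]
    exact .inr ⟨.inr (hb ▸ hx), .inl (.refl σ a)⟩
  · rw [swap_apply_of_ne_of_ne ha hb]
    exact .inl hx

theorem sameCycle_swap_mul_of_not_sameCycle [Finite α] (h : ¬ σ.SameCycle a b) :
    (swap a b * σ).SameCycle a b := by
  set g := swap a b * σ
  -- `g` follows `σ` along the `σ`-orbit of `a`, except at `σ⁻¹ a`, which it sends to `b`.
  have orbit (n : ℕ) : g.SameCycle a ((σ ^ n) a) := by
    induction n with
    | zero => exact .refl g a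
    | succ n ih =>
      rw [pow_succ', mul_apply]
      by_cases ha : σ ((σ ^ n) a) = a
      · rw [ha]
      have hb : σ ((σ ^ n) a) ≠ b := fun hb =>
        h (hb ▸ sameCycle_apply_right.2 (sameCycle_pow_right.2 (.refl σ a)))
      have hg : g ((σ ^ n) a) = σ ((σ ^ n) a) := swap_apply_of_ne_of_ne ha hb
      exact hg ▸ ih.trans (sameCycle_apply_right.2 (.refl g _))
  obtain ⟨n, -, hn⟩ := SameCycle.exists_pow_eq' (f := σ) (x := a) (y := σ⁻¹ a) ⟨-1, by simp⟩
  have hgb : g (σ⁻¹ a) = b := by simp [g]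
  exact hgb ▸ sameCycle_apply_right.2 (hn ▸ orbit n)

theorem SameCycle.setoid_le_setoid_swap_mul (h : (swap a b * σ).SameCycle a b) :
    SameCycle.setoid σ ≤ SameCycle.setoid (swap a b * σ) := by
  have := SameCycle.setoid_swap_mul_le_mergeClasses (swap a b * σ) a b
  rw [swap_mul_self_mul] at this
  exact this.trans (Setoid.mergeClasses_le h)

variable [Fintype α]

theorem card_quotient_sameCycle (σ : Perm α) :
    Nat.card (Quotient (SameCycle.setoid σ)) =
      Multiset.card σ.cycleType + (Fintype.card α - #σ.support) := by
  let φ (x : α) : σ.cycleFactorsFinset ⊕ ↥σ.supportᶜ :=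
    if hx : x ∈ σ.support then .inl ⟨σ.cycleOf x, cycleOf_mem_cycleFactorsFinset_iff.2 hx⟩
    else .inr ⟨x, mem_compl.2 hx⟩
  have hφ (x y : α) : φ x = φ y ↔ σ.SameCycle x y := by
    by_cases hx : x ∈ σ.support <;> by_cases hy : y ∈ σ.support <;>
      simp only [φ, hx, hy, dif_pos, dif_neg, not_false_eq_true, Sum.inl.injEq, Sum.inr.injEq,
        reduceCtorEq, false_iff, Subtype.mk.injEq]
    · exact (sameCycle_iff_cycleOf_eq_of_mem_support hx hy).symm
    · exact fun h => hy (h.mem_support_iff.1 hx)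
    · exact fun h => hx (h.mem_support_iff.2 hy)
    · exact ⟨fun h => h ▸ .refl σ x, fun h => h.eq_of_left (notMem_support.1 hx)⟩
  let f : Quotient (SameCycle.setoid σ) → σ.cycleFactorsFinset ⊕ ↥σ.supportᶜ :=
    Quotient.lift φ fun x y h => (hφ x y).2 h
  have hf : Function.Bijective f := by
    refine ⟨fun q₁ q₂ => Quotient.inductionOn₂ q₁ q₂ fun x y h => Quotient.sound ((hφ x y).1 h), ?_⟩
    rintro (⟨c, hc⟩ | ⟨x, hx⟩)
    · obtain ⟨x, hx⟩ := (mem_cycleFactorsFinset_iff.1 hc).1.nonempty_support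
      refine ⟨⟦x⟧, ?_⟩
      simp only [f, φ, Quotient.lift_mk, dif_pos (mem_cycleFactorsFinset_support_le hc hx)]
      exact congrArg Sum.inl (Subtype.ext (cycle_is_cycleOf hx hc).symm)
    · exact ⟨⟦x⟧, by simp [f, φ, (mem_compl.1 hx)]⟩
  rw [Nat.card_eq_of_bijective f hf, Nat.card_sum, Nat.card_eq_fintype_card, Fintype.card_coe,
    Nat.card_eq_fintype_card, Fintype.card_coe, card_compl, cycleType_def, Multiset.card_map]
  rfl

section Fin

variable {k : ℕ} {σ : Perm (Fin k)} {a b : Fin k}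

theorem cycles_eq_card_quotient (σ : Perm (Fin k)) :
    cycles σ = Nat.card (Quotient (SameCycle.setoid σ)) := by
  rw [card_quotient_sameCycle, Fintype.card_fin]
  rfl

theorem len_one : len (1 : Perm (Fin k)) = 0 := by
  simp [len, cycles]

theorem sign_eq_neg_one_pow_len (σ : Perm (Fin k)) : sign σ = (-1) ^ len σ := by
  have hcard : Multiset.card σ.cycleType * 2 ≤ #σ.support := by
    simpa [sum_cycleType] using
      Multiset.card_nsmul_le_sum fun _ => two_le_of_mem_cycleType (σ := σ)
  have hk : #σ.support ≤ k := by simpa using card_le_univ σ.support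
  have hlen : len σ + 2 * Multiset.card σ.cycleType = #σ.support + Multiset.card σ.cycleType := by
    unfold len cycles
    omega
  rw [sign_of_cycleType, sum_cycleType, ← hlen, pow_add, pow_mul]
  simp

theorem len_swap_mul_ne (hab : a ≠ b) (σ : Perm (Fin k)) : len (swap a b * σ) ≠ len σ := by
  intro h
  have := sign_eq_neg_one_pow_len (swap a b * σ)
  rw [h, ← sign_eq_neg_one_pow_len, sign_mul, sign_swap hab, neg_one_mul] at this
  exact neg_units_ne_self _ this

theorem len_swap_mul_le (σ : Perm (Fin k)) (a b : Fin k) : len (swap a b * σ) ≤ len σ + 1 := by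
  have hmerge := (SameCycle.setoid σ).card_quotient_le_card_quotient_mergeClasses_add_one a b
  have hrefine := Setoid.card_quotient_le_of_le (SameCycle.setoid_swap_mul_le_mergeClasses σ a b)
  simp only [len, cycles_eq_card_quotient]
  omega

theorem len_swap_mul_le_of_sameCycle (h : σ.SameCycle a b) : len (swap a b * σ) ≤ len σ := by
  have := Setoid.card_quotient_le_of_le
    ((SameCycle.setoid_swap_mul_le_mergeClasses σ a b).trans (Setoid.mergeClasses_le h))
  simp only [len, cycles_eq_card_quotient]
  omega

theorem len_swap_mul_add_one (hab : a ≠ b) (h : σ.SameCycle a b) :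
    len (swap a b * σ) + 1 = len σ := by
  have hle := len_swap_mul_le_of_sameCycle h
  have hne := len_swap_mul_ne hab σ
  have hback := len_swap_mul_le (swap a b * σ) a b
  rw [swap_mul_self_mul] at hback
  omega

theorem not_sameCycle_of_len_swap_mul (h : len (swap a b * σ) = len σ + 1) :
    ¬ σ.SameCycle a b := fun hab => by
  have := len_swap_mul_le_of_sameCycle hab
  omega

theorem len_induction {P : Perm (Fin k) → Prop} (one : P 1)
    (swap_mul : ∀ τ a b, a ≠ b → len (swap a b * τ) = len τ + 1 → P τ → P (swap a b * τ))
    (τ : Perm (Fin k)) : P τ := by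
  induction hn : len τ using Nat.strong_induction_on generalizing τ with
  | _ n ih =>
  by_cases hτ : τ = 1
  · exact hτ ▸ one
  obtain ⟨x, hx⟩ : ∃ x, τ x ≠ x := not_forall.1 fun h => hτ (Equiv.ext h)
  have hlen := len_swap_mul_add_one hx.symm (sameCycle_apply_right.2 (.refl τ x))
  rw [← swap_mul_self_mul x (τ x) τ]
  exact swap_mul _ x (τ x) hx.symm (by rw [swap_mul_self_mul]; omega) (ih _ (by omega) _ rfl)

theorem len_mul_le (τ ρ : Perm (Fin k)) : len (τ * ρ) ≤ len τ + len ρ := by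
  induction τ using len_induction with
  | one => simp [len_one]
  | swap_mul τ a b _ hlen ih =>
    have := len_swap_mul_le (τ * ρ) a b
    rw [mul_assoc]
    omega

theorem mem_youngSubgroup_of_len_mul_eq (τ ρ : Perm (Fin k)) (h : len (τ * ρ) = len τ + len ρ) :
    τ ∈ youngSubgroup (τ * ρ) ∧ ρ ∈ youngSubgroup (τ * ρ) := by
  induction τ using len_induction with
  | one => rw [one_mul]; exact ⟨one_mem _, self_mem_youngSubgroup ρ⟩
  | swap_mul τ a b _ hlen ih =>
    rw [mul_assoc] at h ⊢
    have hswap := len_swap_mul_le (τ * ρ) a b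
    have hsub := len_mul_le τ ρ
    obtain ⟨hτ, hρ⟩ := ih (by omega)
    have hstep : len (swap a b * (τ * ρ)) = len (τ * ρ) + 1 := by omega
    have hsc := sameCycle_swap_mul_of_not_sameCycle (not_sameCycle_of_len_swap_mul hstep)
    have hle := youngSubgroup_mono (SameCycle.setoid_le_setoid_swap_mul hsc)
    exact ⟨mul_mem (swap_mem_youngSubgroup hsc) (hle hτ), hle hρ⟩

theorem len_prod_le_sum (l : List (Perm (Fin k))) : len l.prod ≤ (l.map len).sum := by
  induction l with
  | nil => simp [len_one]
  | cons τ l ih =>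
    have := len_mul_le τ l.prod
    simp only [List.prod_cons, List.map_cons, List.sum_cons]
    omega

theorem mem_youngSubgroup_prod_of_len_prod_eq_sum (l : List (Perm (Fin k)))
    (h : len l.prod = (l.map len).sum) : ∀ τ ∈ l, τ ∈ youngSubgroup l.prod := by
  induction l with
  | nil => simp
  | cons τ l ih =>
    simp only [List.prod_cons, List.map_cons, List.sum_cons] at h ⊢
    have hsub := len_mul_le τ l.prod
    have hsum := len_prod_le_sum l
    obtain ⟨hτ, hl⟩ := mem_youngSubgroup_of_len_mul_eq τ l.prod (by omega)
    exact List.forall_mem_cons.2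
      ⟨hτ, fun τ' hτ' => youngSubgroup_le_of_mem hl (ih (by omega) τ' hτ')⟩

end Fin

end Equiv.Perm

theorem factors_mem_youngSubgroup_general {k : ℕ} (σ : Equiv.Perm (Fin k))
    (l : List (Equiv.Perm (Fin k)))
    (hprod : l.prod = σ)
    (hlen : len σ = (l.map len).sum) :
    ∀ τ ∈ l, ∀ x : Fin k, σ.SameCycle x (τ x) := by
  subst hprod
  exact Equiv.Perm.mem_youngSubgroup_prod_of_len_prod_eq_sum l hlen

/-- If `σ = σ_1 ⋯ σ_h` with `|σ| = |σ_1| + ⋯ + |σ_h|` and each `σ_i ≠ 1`,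
then each `σ_i` lies in the Young subgroup `Y_σ` preserving each orbit of
`σ`, i.e. every `σ_i` maps each point into the `σ`-cycle containing it. -/
theorem factors_mem_youngSubgroup {k : ℕ} (σ : Equiv.Perm (Fin k))
    (l : List (Equiv.Perm (Fin k)))
    (hne : ∀ τ ∈ l, τ ≠ 1)
    (hprod : l.prod = σ)
    (hlen : len σ = (l.map len).sum) :
    ∀ τ ∈ l, ∀ x : Fin k, σ.SameCycle x (τ x) :=
  factors_mem_youngSubgroup_general σ l hprod hlen
end

section
/- In the group algebra Q[S_k][d] (d a commuting variable, or a scalar), the identity Σ_{ρ∈S_k} d^{c(ρ)} ρ = d·∏_{i=2}^{k} (d + J_i) holds, where J_i are the Jucys–Murphy elements. -/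
/-- The Jucys–Murphy element `J_i = ∑_{j < i} (j,i)` in `ℚ[S_k]`
(with `J_i = 0` when `i` is the least index). -/
noncomputable def JM (k : ℕ) (i : Fin k) : MonoidAlgebra ℚ (Equiv.Perm (Fin k)) :=
  ∑ j ∈ Finset.univ.filter (fun j : Fin k => j < i),
    MonoidAlgebra.of ℚ (Equiv.Perm (Fin k)) (Equiv.swap j i)

open Equiv Equiv.Perm Finset

namespace Equiv.Perm

variable {α : Type*} [DecidableEq α]

theorem disjoint_swap_of_apply_eq_self {σ : Perm α} {a b : α} (ha : σ a = a) (hb : σ b = b) :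
    σ.Disjoint (swap a b) := fun x => by
  by_cases hxa : x = a
  · exact .inl (hxa ▸ ha)
  by_cases hxb : x = b
  · exact .inl (hxb ▸ hb)
  exact .inr (swap_apply_of_ne_of_ne hxa hxb)

variable [Fintype α]

theorem IsCycle.mul_swap {c : Perm α} (hc : c.IsCycle) {a b : α} (ha : c a ≠ a) (hb : c b = b) :
    (c * swap a b).IsCycle := by
  set f := c * swap a b
  have hab : a ≠ b := fun h => ha (h ▸ hb)
  have hfa : f a = b := by simp [f, hb]
  have hfb : f b = c a := by simp [f]
  have hf : ∀ x, x ≠ a → x ≠ b → f x = c x := fun x hxa hxb => by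
    simp [f, swap_apply_of_ne_of_ne hxa hxb]
  have hsab : SameCycle f a b := ⟨1, by simpa using hfa⟩
  have horbit : ∀ n : ℕ, SameCycle f a ((c ^ n) a) := by
    intro n
    induction n with
    | zero => rfl
    | succ n ih =>
      rw [pow_succ', mul_apply]
      by_cases hn : (c ^ n) a = a
      · rw [hn, ← hfb]
        exact sameCycle_apply_right.2 hsab
      · have hnb : (c ^ n) a ≠ b := fun h =>
          mem_support.1 (pow_apply_mem_support.2 (mem_support.2 ha)) (h ▸ hb)
        rw [← hf _ hn hnb]
        exact sameCycle_apply_right.2 ih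
  refine ⟨a, by rw [hfa]; exact hab.symm, fun y hy => ?_⟩
  by_cases hya : y = a
  · rw [hya]
  by_cases hyb : y = b
  · rw [hyb]; exact hsab
  obtain ⟨n, -, -, rfl⟩ := (hc.sameCycle ha (hf y hya hyb ▸ hy)).exists_pow_eq c
  exact horbit n

theorem support_mul_swap {ρ : Perm α} {a b : α} (ha : ρ a ≠ a) (hb : ρ b = b) :
    (ρ * swap a b).support = insert b ρ.support := by
  have hab : a ≠ b := fun h => ha (h ▸ hb)
  ext x
  by_cases hxa : x = a
  · subst hxa; simp [hb, hab, hab.symm, ha]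
  by_cases hxb : x = b
  · subst hxb
    simp only [mem_support, coe_mul, Function.comp_apply, swap_apply_right, mem_insert, true_or,
      iff_true]
    exact fun h => hab (ρ.injective (h.trans hb.symm))
  · simp [swap_apply_of_ne_of_ne hxa hxb, hxb]

theorem Disjoint.card_cycleType_sub_card_support_mul {σ τ : Perm α} (h : σ.Disjoint τ) :
    ((σ * τ).cycleType.card : ℤ) - #(σ * τ).support
      = (σ.cycleType.card - #σ.support) + (τ.cycleType.card - #τ.support) := by
  rw [h.cycleType_mul, h.card_support_mul, Multiset.card_add]
  push_cast; ring

theorem card_cycleType_sub_card_support_mul_swap {ρ : Perm α} {a b : α} (hab : a ≠ b)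
    (hb : ρ b = b) :
    ((ρ * swap a b).cycleType.card : ℤ) - #(ρ * swap a b).support
      = ρ.cycleType.card - #ρ.support - 1 := by
  by_cases ha : ρ a = a
  · rw [(disjoint_swap_of_apply_eq_self ha hb).card_cycleType_sub_card_support_mul,
      (isCycle_swap hab).cycleType, card_support_swap hab, Multiset.card_singleton]
    push_cast; ring
  · -- Split off the cycle `c` of `a`; then `c * swap a b` is `c` with `b` inserted before `c a`.
    set c := ρ.cycleOf a
    set τ := ρ * c⁻¹
    have hc : c.IsCycle := ρ.isCycle_cycleOf ha
    have hτc : τ.Disjoint c :=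
      disjoint_mul_inv_of_mem_cycleFactorsFinset
        (cycleOf_mem_cycleFactorsFinset_iff.2 (mem_support.2 ha))
    have hca : c a ≠ a := by rwa [cycleOf_apply_self]
    have hcb : c b = b := notMem_support.1 fun h => mem_support.1 (support_cycleOf_le ρ a h) hb
    have hτa : τ a = a := (hτc a).resolve_right hca
    have hτb : τ b = b := by rw [mul_apply, inv_eq_iff_eq.2 hcb.symm, hb]
    have hρ : ρ = τ * c := by simp [τ]
    rw [hρ, mul_assoc,
      (hτc.mul_right (disjoint_swap_of_apply_eq_self hτa hτb)).card_cycleType_sub_card_support_mul,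
      hτc.card_cycleType_sub_card_support_mul, (hc.mul_swap hca hcb).cycleType, hc.cycleType,
      support_mul_swap hca hcb, card_insert_of_notMem (notMem_support.2 hcb),
      Multiset.card_singleton, Multiset.card_singleton]
    push_cast; ring

end Equiv.Perm

section JucysMurphy

variable {α : Type*} [DecidableEq α] [Fintype α]

def permsWithin (s : Finset α) : Finset (Perm α) := univ.filter fun ρ => ρ.support ⊆ s

/-- Cycles of `ρ` as a permutation of `s`, fixed points of `s` included (meant for
`ρ.support ⊆ s`). -/
def cyclesOn (s : Finset α) (ρ : Perm α) : ℕ := ρ.cycleType.card + (#s - #ρ.support)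

theorem mem_permsWithin {s : Finset α} {ρ : Perm α} : ρ ∈ permsWithin s ↔ ρ.support ⊆ s := by
  simp [permsWithin]

theorem permsWithin_empty : permsWithin (∅ : Finset α) = {1} := by
  ext ρ; simp [mem_permsWithin]

theorem permsWithin_univ : permsWithin (univ : Finset α) = univ := by
  ext ρ; simp [mem_permsWithin]

theorem mul_swap_mem_permsWithin_insert {s : Finset α} {ρ : Perm α} {i j : α}
    (hρ : ρ ∈ permsWithin s) (hj : j ∈ insert i s) : ρ * swap j i ∈ permsWithin (insert i s) := by
  rw [mem_permsWithin] at hρ ⊢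
  refine (support_mul_le _ _).trans (sup_le (hρ.trans (subset_insert _ _)) ?_)
  rcases eq_or_ne j i with rfl | hji
  · simp
  · rw [support_swap hji]
    exact insert_subset hj (singleton_subset_iff.2 (mem_insert_self _ _))

theorem sum_permsWithin_insert {M : Type*} [AddCommMonoid M] {s : Finset α} {i : α} (hi : i ∉ s)
    (f : Perm α → M) :
    ∑ ρ ∈ permsWithin (insert i s), f ρ
      = ∑ ρ ∈ permsWithin s, ∑ j ∈ insert i s, f (ρ * swap j i) := by
  rw [← sum_product']
  symm
  refine sum_nbij' (fun p => p.1 * swap p.2 i) (fun σ => (σ * swap (σ⁻¹ i) i, σ⁻¹ i)) ?_ ?_ ?_ ?_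
    (fun _ _ => rfl)
  · rintro ⟨ρ, j⟩ h
    rw [mem_product] at h
    exact mul_swap_mem_permsWithin_insert h.1 h.2
  · intro σ hσ
    have hj : σ⁻¹ i ∈ insert i s := by
      rcases eq_or_ne (σ⁻¹ i) i with h | h
      · rw [h]; exact mem_insert_self _ _
      · exact mem_permsWithin.1 hσ (mem_support.2 (by simpa using h.symm))
    refine mem_product.2 ⟨mem_permsWithin.2 fun x hx => ?_, hj⟩
    have hx' := mem_permsWithin.1 (mul_swap_mem_permsWithin_insert hσ (mem_insert_of_mem hj)) hx
    have hxi : x ≠ i := by rintro rfl; simp at hx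
    simpa [hxi] using hx'
  · rintro ⟨ρ, j⟩ h
    rw [mem_product, mem_permsWithin] at h
    have hρi : ρ i = i := notMem_support.1 fun h' => hi (h.1 h')
    have hinv : (ρ * swap j i)⁻¹ i = j := by
      rw [inv_eq_iff_eq, mul_apply, swap_apply_left, hρi]
    simp only [hinv, mul_assoc, swap_mul_self, mul_one]
  · intro σ _
    simp [mul_assoc]

theorem cyclesOn_insert {s : Finset α} {ρ : Perm α} {i : α} (hi : i ∉ s) (hρ : ρ ∈ permsWithin s) :
    cyclesOn (insert i s) ρ = cyclesOn s ρ + 1 := by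
  have := card_le_card (mem_permsWithin.1 hρ)
  rw [cyclesOn, cyclesOn, card_insert_of_notMem hi]
  omega

theorem cyclesOn_insert_mul_swap {s : Finset α} {ρ : Perm α} {i j : α} (hi : i ∉ s) (hj : j ∈ s)
    (hρ : ρ ∈ permsWithin s) : cyclesOn (insert i s) (ρ * swap j i) = cyclesOn s ρ := by
  have hcard := card_cycleType_sub_card_support_mul_swap (ne_of_mem_of_not_mem hj hi)
    (notMem_support.1 fun h => hi (mem_permsWithin.1 hρ h))
  have h₁ := card_le_card (mem_permsWithin.1 hρ)
  have h₂ := card_le_card <| mem_permsWithin.1 <|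
    mul_swap_mem_permsWithin_insert (i := i) hρ (mem_insert_of_mem hj)
  rw [card_insert_of_notMem hi] at h₂
  rw [cyclesOn, cyclesOn, card_insert_of_notMem hi]
  omega

theorem sum_permsWithin_mul_add_sum_swap {R : Type*} [CommSemiring R] {s : Finset α} {i : α}
    (hi : i ∉ s) (d : R) :
    (∑ ρ ∈ permsWithin s, d ^ cyclesOn s ρ • MonoidAlgebra.of R (Perm α) ρ) *
        (algebraMap R (MonoidAlgebra R (Perm α)) d +
          ∑ j ∈ s, MonoidAlgebra.of R (Perm α) (swap j i))
      = ∑ ρ ∈ permsWithin (insert i s),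
          d ^ cyclesOn (insert i s) ρ • MonoidAlgebra.of R (Perm α) ρ := by
  rw [sum_permsWithin_insert hi, sum_mul]
  refine sum_congr rfl fun ρ hρ => ?_
  rw [sum_insert hi, swap_self, ← Perm.one_def, mul_one, cyclesOn_insert hi hρ, mul_add, mul_sum,
    smul_mul_assoc, ← Algebra.commutes, ← Algebra.smul_def, smul_smul, ← pow_succ]
  congr 1
  refine sum_congr rfl fun j hj => ?_
  rw [cyclesOn_insert_mul_swap hi hj hρ, smul_mul_assoc, map_mul]

end JucysMurphy

theorem cycles_eq_cyclesOn_univ {k : ℕ} (ρ : Perm (Fin k)) : cycles ρ = cyclesOn univ ρ := by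
  simp [cycles, cyclesOn]

theorem prod_take_finRange_add_JM (k : ℕ) (d : ℚ) {m : ℕ} (hm : m ≤ k) :
    (((List.finRange k).take m).map
        fun i => algebraMap ℚ (MonoidAlgebra ℚ (Perm (Fin k))) d + JM k i).prod
      = ∑ ρ ∈ permsWithin (univ.filter fun x : Fin k => (x : ℕ) < m),
          d ^ cyclesOn (univ.filter fun x : Fin k => (x : ℕ) < m) ρ •
            MonoidAlgebra.of ℚ (Perm (Fin k)) ρ := by
  induction m with
  | zero => simp [permsWithin_empty, cyclesOn, MonoidAlgebra.one_def]
  | succ m ih =>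
    set i : Fin k := ⟨m, hm⟩
    have hinsert : (univ.filter fun x : Fin k => (x : ℕ) < m + 1)
        = insert i (univ.filter fun x : Fin k => (x : ℕ) < m) := by
      ext x; simp [i, Fin.ext_iff]; omega
    have hJM : JM k i = ∑ j ∈ univ.filter (fun x : Fin k => (x : ℕ) < m),
        MonoidAlgebra.of ℚ (Perm (Fin k)) (swap j i) := rfl
    rw [List.take_add_one, List.getElem?_eq_getElem (by simpa), List.getElem_finRange]
    simp only [Fin.cast_mk, Option.toList_some, List.map_append, List.map_singleton,
      List.prod_append, List.prod_singleton]
    rw [ih (by omega), hinsert, ← sum_permsWithin_mul_add_sum_swap (by simp [i]), hJM]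

/-- Jucys' factorization: `∑_{ρ ∈ S_k} d^{c(ρ)} ρ = d · ∏_{i=2}^{k} (d + J_i)`
in the group algebra `ℚ[S_k]`; the (ordered) product is over the indices `i`
having at least one smaller index, i.e. `i = 2, …, k` in 1-based notation. -/
theorem jucys_factorization (k : ℕ) (hk : 1 ≤ k) (d : ℚ) :
    ∑ ρ : Equiv.Perm (Fin k),
        d ^ cycles ρ • MonoidAlgebra.of ℚ (Equiv.Perm (Fin k)) ρ
      = algebraMap ℚ (MonoidAlgebra ℚ (Equiv.Perm (Fin k))) d *
        (((List.finRange k).filter (fun i : Fin k => 1 ≤ i.val)).map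
          (fun i => algebraMap ℚ (MonoidAlgebra ℚ (Equiv.Perm (Fin k))) d + JM k i)).prod := by
  obtain ⟨n, rfl⟩ : ∃ n, k = n + 1 := ⟨k - 1, by omega⟩
  have hJM₀ : JM (n + 1) 0 = 0 := by simp [JM]
  have hprod := prod_take_finRange_add_JM (n + 1) d le_rfl
  rw [List.take_of_length_le (by simp)] at hprod
  have huniv : (univ.filter fun x : Fin (n + 1) => (x : ℕ) < n + 1) = univ :=
    filter_true_of_mem fun x _ => x.is_lt
  simp only [huniv, permsWithin_univ, ← cycles_eq_cyclesOn_univ] at hprod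
  rw [← hprod, List.finRange_succ, List.map_cons, List.prod_cons, hJM₀, add_zero,
    List.filter_cons_of_neg (by simp), List.filter_eq_self.2 (by simp [Nat.one_le_iff_ne_zero])]
end

section
/- The symmetric bilinear form on the group algebra Q[S_k] defined by ⟨σ, τ⟩ := d^{c(στ)} is non-degenerate whenever d ≥ k. -/
open Equiv Finset

namespace Equiv.Perm

theorem SameCycle.apply_eq_of_comp_eq_self {α β : Type*} [Finite α] {σ : Perm α} {f : α → β}
    (hf : f ∘ σ = f) {a b : α} (h : σ.SameCycle a b) : f a = f b := by
  obtain ⟨n, rfl⟩ := h.exists_nat_pow_eq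
  clear h
  induction n with
  | zero => rfl
  | succ n ih => rw [ih, pow_succ', mul_apply]; exact (congrFun hf _).symm

theorem comp_eq_comp_iff_comp_mul_inv_eq_self {α β : Type*} {σ τ : Perm α} {f : α → β} :
    f ∘ σ = f ∘ τ ↔ f ∘ ⇑(σ * τ⁻¹) = f := by
  rw [coe_mul, ← Function.comp_assoc, ← (τ⁻¹).surjective.injective_comp_right.eq_iff]
  simp only [Function.comp_assoc, ← coe_mul, mul_inv_cancel, coe_one, Function.comp_id]

variable {α : Type*} [Fintype α] [DecidableEq α] (σ : Perm α)

def cycleOrFixedPoint (a : α) : σ.cycleFactorsFinset ⊕ Function.fixedPoints σ :=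
  if h : σ a = a then .inr ⟨a, h⟩
  else .inl ⟨σ.cycleOf a, cycleOf_mem_cycleFactorsFinset_iff.mpr (mem_support.mpr h)⟩

variable {σ}

theorem cycleOrFixedPoint_eq_iff {a b : α} :
    σ.cycleOrFixedPoint a = σ.cycleOrFixedPoint b ↔ σ.SameCycle a b := by
  unfold cycleOrFixedPoint
  by_cases ha : σ a = a <;> by_cases hb : σ b = b
  · simp only [dif_pos ha, dif_pos hb, Sum.inr.injEq]
    exact ⟨fun h => (congrArg Subtype.val h).sameCycle σ,
      fun h => Subtype.ext (h.eq_of_left ha)⟩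
  · simp only [dif_pos ha, dif_neg hb, reduceCtorEq, false_iff]
    exact fun h => hb (h.apply_eq_self_iff.mp ha)
  · simp only [dif_neg ha, dif_pos hb, reduceCtorEq, false_iff]
    exact fun h => ha (h.apply_eq_self_iff.mpr hb)
  · simp only [dif_neg ha, dif_neg hb, Sum.inl.injEq, Subtype.mk.injEq]
    exact (sameCycle_iff_cycleOf_eq_of_mem_support (mem_support.mpr ha)
      (mem_support.mpr hb)).symm

theorem cycleOrFixedPoint_surjective : Function.Surjective σ.cycleOrFixedPoint := by
  rintro (⟨c, hc⟩ | ⟨a, ha⟩)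
  · obtain ⟨a, ha⟩ := (mem_cycleFactorsFinset_iff.mp hc).1.nonempty_support
    refine ⟨a, ?_⟩
    rw [cycleOrFixedPoint, dif_neg (mem_support.mp (mem_cycleFactorsFinset_support_le hc ha))]
    exact congrArg Sum.inl (Subtype.ext (cycle_is_cycleOf ha hc).symm)
  · exact ⟨a, dif_pos ha⟩

variable (β : Type*) (σ)

noncomputable def compEqSelfEquiv :
    (σ.cycleFactorsFinset ⊕ Function.fixedPoints σ → β) ≃ {f : α → β // f ∘ σ = f} :=
  Equiv.ofBijective (fun g => ⟨g ∘ σ.cycleOrFixedPoint, funext fun a => congrArg g <|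
      cycleOrFixedPoint_eq_iff.mpr (sameCycle_apply_left.mpr .rfl)⟩) <| by
    refine ⟨fun g g' h => cycleOrFixedPoint_surjective.injective_comp_right
      (congrArg Subtype.val h), fun ⟨f, hf⟩ =>
        ⟨f ∘ Function.surjInv cycleOrFixedPoint_surjective, ?_⟩⟩
    ext a
    exact (cycleOrFixedPoint_eq_iff.mp
      (Function.surjInv_eq cycleOrFixedPoint_surjective _)).apply_eq_of_comp_eq_self hf

theorem card_comp_eq_self [Fintype β] [DecidableEq β] :
    #{f : α → β | f ∘ σ = f} =
      Fintype.card β ^ (σ.cycleType.card + (Fintype.card α - #σ.support)) := by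
  rw [← Fintype.card_subtype, ← Fintype.card_congr (compEqSelfEquiv σ β), Fintype.card_fun,
    Fintype.card_sum, Fintype.card_coe, card_fixedPoints, sum_cycleType, cycleType_def,
    Multiset.card_map]
  rfl

end Equiv.Perm

section PlaceMatrix

variable {α β R : Type*} [Fintype α] [DecidableEq α] [DecidableEq β]

/-- The matrix of `∑ σ, x σ • σ` acting on `(R^β)^{⊗α}` by permuting the tensor factors, in the
basis indexed by `α → β`. -/
def placeMatrix [Semiring R] (x : Perm α → R) : Matrix (α → β) (α → β) R :=
  fun f g => ∑ σ : Perm α, if f ∘ σ = g then x σ else 0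

theorem sum_placeMatrix_sq [Fintype β] [CommSemiring R] (x : Perm α → R) :
    ∑ f, ∑ g, placeMatrix (β := β) x f g ^ 2 =
      ∑ τ : Perm α, x τ * ∑ σ : Perm α, x σ * #{f : α → β | f ∘ σ = f ∘ τ} := by
  have hrow : ∀ f : α → β, ∑ g, placeMatrix x f g ^ 2 =
      ∑ τ : Perm α, ∑ σ : Perm α, x τ * x σ * if f ∘ σ = f ∘ τ then 1 else 0 := by
    intro f
    simp only [placeMatrix, sq, sum_mul_sum]
    rw [sum_comm]
    refine sum_congr rfl fun τ _ => ?_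
    rw [sum_comm]
    refine sum_congr rfl fun σ _ => ?_
    simp only [ite_mul, mul_ite, zero_mul, mul_zero, mul_one]
    rw [Fintype.sum_ite_eq]
    exact if_congr eq_comm rfl rfl
  simp_rw [hrow, mul_sum]
  rw [sum_comm]
  refine sum_congr rfl fun τ _ => ?_
  rw [sum_comm]
  refine sum_congr rfl fun σ _ => ?_
  rw [← mul_sum, sum_boole, mul_assoc]

theorem placeMatrix_apply_comp_of_injective [Semiring R] (x : Perm α → R) {f : α → β}
    (hf : f.Injective) (σ : Perm α) : placeMatrix x f (f ∘ σ) = x σ := by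
  rw [placeMatrix, sum_eq_single σ (fun τ _ hτ => if_neg fun h => hτ ?_) (by simp), if_pos rfl]
  exact DFunLike.coe_injective (hf.comp_left h)

end PlaceMatrix

theorem card_comp_eq_comp_eq_pow_cycles {k d : ℕ} (σ τ : Perm (Fin k)) :
    #{f : Fin k → Fin d | f ∘ σ = f ∘ τ} = d ^ cycles (σ * τ⁻¹) := by
  simp_rw [Perm.comp_eq_comp_iff_comp_mul_inv_eq_self]
  rw [Perm.card_comp_eq_self, Fintype.card_fin, Fintype.card_fin, cycles]

theorem form_nondegenerate_general (k d : ℕ) (hd : k ≤ d)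
    (x : MonoidAlgebra ℚ (Equiv.Perm (Fin k)))
    (hx : ∀ τ : Equiv.Perm (Fin k),
      ∑ σ : Equiv.Perm (Fin k), x.coeff σ * (d : ℚ) ^ cycles (σ * τ) = 0) :
    x = 0 := by
  have hsq : ∑ f : Fin k → Fin d, ∑ g, placeMatrix x.coeff f g ^ 2 = 0 := by
    simp_rw [sum_placeMatrix_sq, card_comp_eq_comp_eq_pow_cycles]
    push_cast
    exact sum_eq_zero fun τ _ => by rw [hx τ⁻¹, mul_zero]
  have hzero : ∀ f g : Fin k → Fin d, placeMatrix x.coeff f g = 0 := by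
    intro f g
    have hrows := (Fintype.sum_eq_zero_iff_of_nonneg fun f => sum_nonneg fun g _ =>
      sq_nonneg (placeMatrix x.coeff f g)).mp hsq
    have hrow := (Fintype.sum_eq_zero_iff_of_nonneg fun g => sq_nonneg _).mp (congrFun hrows f)
    exact pow_eq_zero_iff two_ne_zero |>.mp (congrFun hrow g)
  ext σ
  rw [← placeMatrix_apply_comp_of_injective x.coeff (Fin.castLE_injective hd) σ, hzero]
  rfl

/-- The symmetric bilinear form `⟨σ, τ⟩ := d^{c(στ)}` on the group algebra
`ℚ[S_k]` is non-degenerate whenever `d ≥ k`. -/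
theorem form_nondegenerate (k d : ℕ) (hd : k ≤ d) (hdpos : 0 < d)
    (x : MonoidAlgebra ℚ (Equiv.Perm (Fin k)))
    (hx : ∀ τ : Equiv.Perm (Fin k),
      ∑ σ : Equiv.Perm (Fin k), x.coeff σ * (d : ℚ) ^ cycles (σ * τ) = 0) :
    x = 0 :=
  form_nondegenerate_general k d hd x hx
end
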